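/- arXiv:1509.04059 — 6 statements merged into one kernel-verified Lean document; each statement's English description precedes it below -/
import Mathlib

section
/- For any unit-norm vectors φ₁,…,φₙ in ℝᵐ (or ℂᵐ) with m ≤ n, the maximum over i ≠ j of |⟨φᵢ, φⱼ⟩| is at least √((n−m)/(m(n−1))). -/
/-!
The Gram matrix `G = Φᴴ Φ` and the frame operator `Φ Φᴴ` have the same trace `n` and the same
Frobenius norm. Cauchy–Schwarz on the `m` diagonal entries of `Φ Φᴴ` gives
`n² ≤ m ‖G‖²_F = m (n + ∑_{i ≠ j} ‖G i j‖²)`, so the largest of the `n (n - 1)` off-diagonal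
entries has `‖G i j‖² ≥ (n - m) / (m (n - 1))`.
-/

open Matrix Finset

namespace Matrix

variable {𝕜 : Type*} [RCLike 𝕜] {m n : Type*} [Fintype m] [Fintype n]

theorem sum_norm_sq_eq_re_trace_mul_conjTranspose (B : Matrix m n 𝕜) :
    ∑ i, ∑ j, ‖B i j‖ ^ 2 = RCLike.re (B * Bᴴ).trace := by
  simp only [trace, diag, mul_apply, conjTranspose_apply, RCLike.star_def, RCLike.mul_conj,
    map_sum, ← RCLike.ofReal_pow, RCLike.ofReal_re]

theorem sum_norm_sq_mul_conjTranspose_self (Φ : Matrix m n 𝕜) :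
    ∑ i, ∑ j, ‖(Φ * Φᴴ) i j‖ ^ 2 = ∑ i, ∑ j, ‖(Φᴴ * Φ) i j‖ ^ 2 := by
  rw [sum_norm_sq_eq_re_trace_mul_conjTranspose, sum_norm_sq_eq_re_trace_mul_conjTranspose,
    (isHermitian_mul_conjTranspose_self Φ).eq, (isHermitian_conjTranspose_mul_self Φ).eq,
    Matrix.mul_assoc, trace_mul_comm]
  simp only [Matrix.mul_assoc]

theorem norm_trace_sq_le_card_mul_sum_norm_sq (A : Matrix n n 𝕜) :
    ‖A.trace‖ ^ 2 ≤ Fintype.card n * ∑ i, ∑ j, ‖A i j‖ ^ 2 :=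
  calc ‖A.trace‖ ^ 2 ≤ (∑ i, ‖A i i‖) ^ 2 := by
        gcongr; exact norm_sum_le _ _
    _ ≤ Fintype.card n * ∑ i, ‖A i i‖ ^ 2 := sq_sum_le_card_mul_sum_sq
    _ ≤ Fintype.card n * ∑ i, ∑ j, ‖A i j‖ ^ 2 := by
        gcongr with i
        exact single_le_sum (f := fun j ↦ ‖A i j‖ ^ 2) (fun _ _ ↦ by positivity) (mem_univ i)

theorem card_sq_le_card_mul_sum_norm_sq_gram (Φ : Matrix m n 𝕜)
    (hunit : ∀ j, (Φᴴ * Φ) j j = 1) :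
    (Fintype.card n : ℝ) ^ 2 ≤ Fintype.card m * ∑ i, ∑ j, ‖(Φᴴ * Φ) i j‖ ^ 2 := by
  have htrace : (Φ * Φᴴ).trace = Fintype.card n := by
    rw [trace_mul_comm]; simp [trace, hunit]
  rw [← sum_norm_sq_mul_conjTranspose_self]
  simpa [htrace] using norm_trace_sq_le_card_mul_sum_norm_sq (Φ * Φᴴ)

end Matrix

theorem Fintype.sum_sum_eq_sum_add_sum_offDiag {ι M : Type*} [Fintype ι] [DecidableEq ι]
    [AddCommMonoid M] (f : ι → ι → M) :
    ∑ i, ∑ j, f i j = ∑ i, f i i + ∑ p ∈ univ.offDiag, f p.1 p.2 := by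
  rw [← sum_product', ← diag_union_offDiag, sum_union (disjoint_diag_offDiag _), sum_diag]

theorem welch_bound_general {𝕜 : Type*} [RCLike 𝕜] (m n : ℕ) (hm : 0 < m) (hn : 1 < n)
    (Φ : Matrix (Fin m) (Fin n) 𝕜)
    (hunit : ∀ j, (Φᴴ * Φ) j j = 1) :
    ∃ i j, i ≠ j ∧
      Real.sqrt (((n : ℝ) - m) / (m * ((n : ℝ) - 1))) ≤ ‖(Φᴴ * Φ) i j‖ := by
  set G := Φᴴ * Φ
  set offS := ∑ p ∈ univ.offDiag, ‖G p.1 p.2‖ ^ 2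
  have hframe : (n : ℝ) ^ 2 ≤ m * (n + offS) := by
    simpa [Fintype.sum_sum_eq_sum_add_sum_offDiag, G, hunit] using
      card_sq_le_card_mul_sum_norm_sq_gram Φ hunit
  have hcard : ((univ : Finset (Fin n)).offDiag.card : ℝ) = n * (n - 1) := by
    rw [offDiag_card, card_univ, Fintype.card_fin, Nat.cast_sub (Nat.le_mul_self n)]
    push_cast; ring
  have hm' : (0 : ℝ) < m := by exact_mod_cast hm
  have hn' : (1 : ℝ) < n := by exact_mod_cast hn
  have hoff : (univ : Finset (Fin n)).offDiag.Nonempty :=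
    ⟨(⟨0, by omega⟩, ⟨1, hn⟩), by simp [Fin.ext_iff]⟩
  obtain ⟨⟨i, j⟩, hij, hle⟩ := exists_le_of_sum_le hoff
    (f := fun _ ↦ ((n : ℝ) - m) / (m * (n - 1))) (g := fun p ↦ ‖G p.1 p.2‖ ^ 2) <| by
      rw [sum_const, nsmul_eq_mul, hcard]
      calc (n * (n - 1) : ℝ) * ((n - m) / (m * (n - 1))) = n * (n - m) / m := by
            field_simp [(by linarith : (n : ℝ) - 1 ≠ 0)]
        _ ≤ offS := by rw [div_le_iff₀ hm']; nlinarith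
  exact ⟨i, j, (mem_offDiag.1 hij).2.2, Real.sqrt_le_iff.2 ⟨norm_nonneg _, hle⟩⟩

/-- **Welch bound.** For unit-norm vectors `φ₁,…,φₙ` in `𝕜^m` (columns of `Φ`),
the maximum over `i ≠ j` of `|⟨φᵢ, φⱼ⟩|` is at least `√((n−m)/(m(n−1)))`. -/
theorem welch_bound {𝕜 : Type*} [RCLike 𝕜] (m n : ℕ) (hm : 0 < m) (hmn : m ≤ n) (hn : 1 < n)
    (Φ : Matrix (Fin m) (Fin n) 𝕜)
    (hunit : ∀ j, (Φᴴ * Φ) j j = 1) :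
    ∃ i j, i ≠ j ∧
      Real.sqrt (((n : ℝ) - m) / (m * ((n : ℝ) - 1))) ≤ ‖(Φᴴ * Φ) i j‖ :=
  welch_bound_general m n hm hn Φ hunit
end

section
/- Let A be the adjacency matrix of a graph on n vertices with A𝟏 = k𝟏, and suppose there exist scalars α, β > 0 such that [2βA + (β+1)I − βJ]² = α[2βA + (β+1)I − βJ]. Then A² = xA + yI + zJ where x = (α−2β−2)/(2β), y = (α−β−1)(β+1)/(4β²), and z = (4βk+2β+2−βn−α)/(4β); consequently A is the adjacency matrix of a strongly regular graph whose parameters satisfy λ + μ = 2k − n/2, i.e., v = n = 4k − 2λ − 2μ. -/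
open Matrix

/-- `A` is the adjacency matrix of a strongly regular graph with parameters
`(v, k, λ, μ)`. -/
def IsSRG {v : ℕ} (A : Matrix (Fin v) (Fin v) ℝ) (k l mu : ℝ) : Prop :=
  A.IsAdjMatrix ∧
    (A *ᵥ (fun _ => (1 : ℝ)) = fun _ => k) ∧
    A * A = (l - mu) • A + (k - mu) • (1 : Matrix (Fin v) (Fin v) ℝ)
      + mu • Matrix.of (fun _ _ => (1 : ℝ))

/-! Writing `J` for the all-ones matrix, regularity and symmetry of `A` give `AJ = JA = kJ`, and
`J² = nJ`; expanding `M² = αM` for `M = 2βA + (β+1)I − βJ` therefore leaves a linear relation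
between `A²`, `A`, `I` and `J`, which is solved for `A²` since `β ≠ 0`. For a `0/1` symmetric
matrix with zero diagonal the diagonal of `A²` equals the row sum `k`, which pins the coefficient
of `I` down to `k − μ`, as strong regularity demands. -/

section AllOnes

variable {ι R : Type*} [Fintype ι]

theorem Matrix.mul_of_one_eq_smul_of_mulVec_one [CommSemiring R] {A : Matrix ι ι R} {k : R}
    (hA : A *ᵥ (fun _ => 1) = k • fun _ => 1) :
    A * Matrix.of (fun _ _ => 1) = k • Matrix.of (fun _ _ => 1) := by
  ext i j
  simpa [mulVec, dotProduct, mul_apply] using congrFun hA i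

theorem Matrix.of_one_mul_eq_smul_of_mulVec_one [CommSemiring R] {A : Matrix ι ι R} {k : R}
    (hsymm : Aᵀ = A) (hA : A *ᵥ (fun _ => 1) = k • fun _ => 1) :
    Matrix.of (fun _ _ => 1) * A = k • Matrix.of (fun _ _ => 1) := by
  have hJ : (Matrix.of fun _ _ => (1 : R) : Matrix ι ι R)ᵀ = Matrix.of fun _ _ => 1 := rfl
  calc Matrix.of (fun _ _ => 1) * A = (A * Matrix.of (fun _ _ => 1))ᵀ := by
        rw [transpose_mul, hJ, hsymm]
    _ = k • Matrix.of (fun _ _ => 1) := by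
        rw [mul_of_one_eq_smul_of_mulVec_one hA, transpose_smul, hJ]

theorem Matrix.of_one_mul_of_one [Semiring R] :
    (Matrix.of (fun _ _ => 1) : Matrix ι ι R) * Matrix.of (fun _ _ => 1)
      = (Fintype.card ι : R) • Matrix.of (fun _ _ => 1) := by
  ext i j
  simp [mul_apply]

end AllOnes

theorem Matrix.mul_self_eq_of_mul_self_eq_smul {ι K : Type*} [Fintype ι] [DecidableEq ι]
    [Field K] [CharZero K] {A J : Matrix ι ι K} {k n α β : K}
    (hAJ : A * J = k • J) (hJA : J * A = k • J) (hJJ : J * J = n • J) (hβ : β ≠ 0)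
    (hsq : ((2 * β) • A + (β + 1) • (1 : Matrix ι ι K) - β • J) *
        ((2 * β) • A + (β + 1) • (1 : Matrix ι ι K) - β • J)
      = α • ((2 * β) • A + (β + 1) • (1 : Matrix ι ι K) - β • J)) :
    A * A = ((α - 2 * β - 2) / (2 * β)) • A
        + ((α - β - 1) * (β + 1) / (4 * β ^ 2)) • (1 : Matrix ι ι K)
        + ((4 * β * k + 2 * β + 2 - β * n - α) / (4 * β)) • J := by
  have hβ2 : (4 * β ^ 2 : K) ≠ 0 := mul_ne_zero (by norm_num) (pow_ne_zero 2 hβ)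
  simp only [mul_add, add_mul, mul_sub, sub_mul, smul_mul_assoc, mul_smul_comm,
    Matrix.one_mul, Matrix.mul_one, hAJ, hJA, hJJ, smul_add, smul_sub, smul_smul] at hsq
  apply smul_right_injective _ hβ2
  simp only [smul_add, smul_smul]
  rw [show (4 * β ^ 2 : K) * ((α - 2 * β - 2) / (2 * β)) = 2 * β * (α - 2 * β - 2) by
        field_simp; ring,
    show (4 * β ^ 2 : K) * ((α - β - 1) * (β + 1) / (4 * β ^ 2)) = (α - β - 1) * (β + 1) by
        field_simp,
    show (4 * β ^ 2 : K) * ((4 * β * k + 2 * β + 2 - β * n - α) / (4 * β))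
        = β * (4 * β * k + 2 * β + 2 - β * n - α) by field_simp]
  linear_combination (norm := module) hsq

theorem Matrix.IsAdjMatrix.mul_self_apply_self {ι R : Type*} [Fintype ι] [Semiring R]
    {A : Matrix ι ι R} (h : A.IsAdjMatrix) (i : ι) : (A * A) i i = ∑ j, A i j := by
  rw [mul_apply]
  refine Finset.sum_congr rfl fun j _ => ?_
  rw [h.symm.apply i j]
  rcases h.zero_or_one i j with h0 | h1
  · rw [h0, zero_mul]
  · rw [h1, one_mul]

theorem Matrix.IsAdjMatrix.isSRG_of_mul_self_eq {n : ℕ} {A : Matrix (Fin n) (Fin n) ℝ}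
    (h : A.IsAdjMatrix) {k x y z : ℝ} (hreg : A *ᵥ (fun _ => (1 : ℝ)) = k • (fun _ => (1 : ℝ)))
    (hsq : A * A = x • A + y • (1 : Matrix (Fin n) (Fin n) ℝ) + z • Matrix.of (fun _ _ => 1)) :
    IsSRG A k (x + z) z := by
  have hreg' : A *ᵥ (fun _ => (1 : ℝ)) = fun _ => k := funext fun i => by
    simpa using congrFun hreg i
  refine ⟨h, hreg', ?_⟩
  rw [add_sub_cancel_right]
  rcases isEmpty_or_nonempty (Fin n) with _ | ⟨⟨i⟩⟩
  · exact Subsingleton.elim _ _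
  have hdiag : k = y + z := by
    have hrow : ∑ j, A i j = k := by simpa [mulVec, dotProduct] using congrFun hreg' i
    have := congrFun (congrFun hsq i) i
    rw [h.mul_self_apply_self, hrow] at this
    simpa [h.apply_diag i] using this
  rwa [hdiag, add_sub_cancel_right]

theorem regular_graph_etf_condition_gives_srg_general (n : ℕ)
    (A : Matrix (Fin n) (Fin n) ℝ) (hadj : A.IsAdjMatrix) (k : ℝ)
    (hreg : A *ᵥ (fun _ => (1 : ℝ)) = k • (fun _ => (1 : ℝ)))
    (α β : ℝ) (hβ : 0 < β)
    (hsq : ((2 * β) • A + (β + 1) • (1 : Matrix (Fin n) (Fin n) ℝ)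
          - β • Matrix.of (fun _ _ => (1 : ℝ))) *
        ((2 * β) • A + (β + 1) • (1 : Matrix (Fin n) (Fin n) ℝ)
          - β • Matrix.of (fun _ _ => (1 : ℝ)))
      = α • ((2 * β) • A + (β + 1) • (1 : Matrix (Fin n) (Fin n) ℝ)
          - β • Matrix.of (fun _ _ => (1 : ℝ)))) :
    A * A = ((α - 2 * β - 2) / (2 * β)) • A
        + ((α - β - 1) * (β + 1) / (4 * β ^ 2)) • (1 : Matrix (Fin n) (Fin n) ℝ)
        + ((4 * β * k + 2 * β + 2 - β * n - α) / (4 * β)) • Matrix.of (fun _ _ => (1 : ℝ))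
      ∧ IsSRG A k
          ((α - 2 * β - 2) / (2 * β) + (4 * β * k + 2 * β + 2 - β * n - α) / (4 * β))
          ((4 * β * k + 2 * β + 2 - β * n - α) / (4 * β))
      ∧ ((α - 2 * β - 2) / (2 * β) + (4 * β * k + 2 * β + 2 - β * n - α) / (4 * β))
          + (4 * β * k + 2 * β + 2 - β * n - α) / (4 * β) = 2 * k - (n : ℝ) / 2
      ∧ (n : ℝ) = 4 * k
          - 2 * ((α - 2 * β - 2) / (2 * β) + (4 * β * k + 2 * β + 2 - β * n - α) / (4 * β))
          - 2 * ((4 * β * k + 2 * β + 2 - β * n - α) / (4 * β)) := by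
  have hJJ := Matrix.of_one_mul_of_one (ι := Fin n) (R := ℝ)
  rw [Fintype.card_fin] at hJJ
  have hA2 := mul_self_eq_of_mul_self_eq_smul (mul_of_one_eq_smul_of_mulVec_one hreg)
    (of_one_mul_eq_smul_of_mulVec_one hadj.symm hreg) hJJ hβ.ne' hsq
  refine ⟨hA2, hadj.isSRG_of_mul_self_eq hreg hA2, ?_, ?_⟩ <;>
  · field_simp
    ring

/-- Let `A` be the adjacency matrix of a graph on `n` vertices with `A𝟏 = k𝟏`,
and suppose `[2βA + (β+1)I − βJ]² = α[2βA + (β+1)I − βJ]` for scalars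
`α, β > 0`.  Then `A² = xA + yI + zJ` with `x = (α−2β−2)/(2β)`,
`y = (α−β−1)(β+1)/(4β²)`, `z = (4βk+2β+2−βn−α)/(4β)`; consequently `A` is the
adjacency matrix of an SRG (with `λ = x + z`, `μ = z`) whose parameters
satisfy `λ + μ = 2k − n/2`, i.e. `v = n = 4k − 2λ − 2μ`. -/
theorem regular_graph_etf_condition_gives_srg (n : ℕ)
    (A : Matrix (Fin n) (Fin n) ℝ) (hadj : A.IsAdjMatrix) (k : ℝ)
    (hreg : A *ᵥ (fun _ => (1 : ℝ)) = k • (fun _ => (1 : ℝ)))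
    (α β : ℝ) (hα : 0 < α) (hβ : 0 < β)
    (hsq : ((2 * β) • A + (β + 1) • (1 : Matrix (Fin n) (Fin n) ℝ)
          - β • Matrix.of (fun _ _ => (1 : ℝ))) *
        ((2 * β) • A + (β + 1) • (1 : Matrix (Fin n) (Fin n) ℝ)
          - β • Matrix.of (fun _ _ => (1 : ℝ)))
      = α • ((2 * β) • A + (β + 1) • (1 : Matrix (Fin n) (Fin n) ℝ)
          - β • Matrix.of (fun _ _ => (1 : ℝ)))) :
    A * A = ((α - 2 * β - 2) / (2 * β)) • A
        + ((α - β - 1) * (β + 1) / (4 * β ^ 2)) • (1 : Matrix (Fin n) (Fin n) ℝ)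
        + ((4 * β * k + 2 * β + 2 - β * n - α) / (4 * β)) • Matrix.of (fun _ _ => (1 : ℝ))
      ∧ IsSRG A k
          ((α - 2 * β - 2) / (2 * β) + (4 * β * k + 2 * β + 2 - β * n - α) / (4 * β))
          ((4 * β * k + 2 * β + 2 - β * n - α) / (4 * β))
      ∧ ((α - 2 * β - 2) / (2 * β) + (4 * β * k + 2 * β + 2 - β * n - α) / (4 * β))
          + (4 * β * k + 2 * β + 2 - β * n - α) / (4 * β) = 2 * k - (n : ℝ) / 2
      ∧ (n : ℝ) = 4 * k
          - 2 * ((α - 2 * β - 2) / (2 * β) + (4 * β * k + 2 * β + 2 - β * n - α) / (4 * β))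
          - 2 * ((4 * β * k + 2 * β + 2 - β * n - α) / (4 * β)) :=
  regular_graph_etf_condition_gives_srg_general n A hadj k hreg α β hβ hsq
end

section
/- Let φ₁,…,φₙ be a centered ETF for ℝᵐ with m < n, α = n/m, β = √((n−m)/(m(n−1))). Then A = (1/(2β))Φ*Φ − ((β+1)/(2β))I + (1/2)J is the adjacency matrix of an SRG(v,k,λ,μ) with v = n, k = (n−1)/2 − 1/(2β), λ = n/4 − 1 + (α−4)/(4β), μ = n/4 − α/(4β), and these parameters satisfy v = 4k − 2λ − 2μ. -/
open Matrix

/-!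
Write `G = ΦᴴΦ` for the Gram matrix. Tightness gives `G² = (n/m) G` and centering gives
`GJ = JG = 0`, so `A = aG - bI + dJ` lives in the commutative algebra spanned by `G`, `I`, `J`,
where `A²` is again a combination of `A`, `I`, `J`; matching its coefficients with the claimed
parameters uses only the Welch bound `β² m (n - 1) = n - m`. Since `G` has unit diagonal and
off-diagonal entries `±β`, `A = (J - I + (G - I)/β)/2` is a `0/1` matrix with zero diagonal.
-/

theorem welch_bound_pos_and_sq {m n β : ℝ} (hm : 1 ≤ m) (hmn : m < n)
    (hβ : β = √((n - m) / (m * (n - 1)))) : 0 < β ∧ β ^ 2 * (m * (n - 1)) = n - m := by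
  have hden : 0 < m * (n - 1) := mul_pos (by linarith) (by linarith)
  have hquot : 0 < (n - m) / (m * (n - 1)) := div_pos (by linarith) hden
  refine ⟨hβ ▸ Real.sqrt_pos.mpr hquot, ?_⟩
  rw [hβ, Real.sq_sqrt hquot.le, div_mul_cancel₀ _ hden.ne']

namespace Matrix

theorem isAdjMatrix_of_equiangular {ι : Type*} [DecidableEq ι] {G : Matrix ι ι ℝ} {β : ℝ}
    (hβ : 0 < β) (hG : G.IsSymm) (hdiag : ∀ i, G i i = 1)
    (hoff : ∀ i j, i ≠ j → |G i j| = β) :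
    ((2 * β)⁻¹ • G - ((β + 1) / (2 * β)) • (1 : Matrix ι ι ℝ)
      + (2⁻¹ : ℝ) • of (fun _ _ => 1)).IsAdjMatrix := by
  have apply_diag (i : ι) : ((2 * β)⁻¹ • G - ((β + 1) / (2 * β)) • (1 : Matrix ι ι ℝ)
      + (2⁻¹ : ℝ) • of (fun _ _ => 1) : Matrix ι ι ℝ) i i = 0 := by
    simp only [add_apply, sub_apply, smul_apply, one_apply_eq, of_apply, smul_eq_mul, hdiag i]
    field_simp
    ring
  refine ⟨fun i j => ?_, ((hG.smul _).sub (isSymm_one.smul _)).add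
    ((IsSymm.ext fun _ _ => rfl).smul _), apply_diag⟩
  rcases eq_or_ne i j with rfl | hij
  · exact .inl (apply_diag i)
  simp only [add_apply, sub_apply, smul_apply, one_apply_ne hij, of_apply, smul_eq_mul]
  rcases (abs_eq hβ.le).mp (hoff i j hij) with h | h <;> rw [h]
  · right
    field_simp
    ring
  · left
    field_simp
    ring

variable {ι R : Type*} [Fintype ι]

section CommSemiring

variable [CommSemiring R]

theorem mul_mul_self_eq_smul_of_mul_eq_smul_one {κ : Type*} [Fintype κ] [DecidableEq κ]
    {Φ : Matrix κ ι R} {Ψ : Matrix ι κ R} {c : R} (h : Φ * Ψ = c • 1) :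
    Ψ * Φ * (Ψ * Φ) = c • (Ψ * Φ) := by
  rw [Matrix.mul_assoc, ← Matrix.mul_assoc Φ, h, smul_mul, Matrix.one_mul, Matrix.mul_smul]

theorem of_one_mul_of_one_s14 :
    (of fun _ _ => 1 : Matrix ι ι R) * of (fun _ _ => 1) =
      (Fintype.card ι : R) • of fun _ _ => 1 := by
  ext i j
  simp [mul_apply]

theorem mul_of_one_eq_zero {G : Matrix ι ι R} (h : G *ᵥ (fun _ => 1) = 0) :
    G * of (fun _ _ => 1) = 0 := by
  ext i j
  simpa [mul_apply, mulVec, dotProduct] using congrFun h i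

theorem IsSymm.of_one_mul_eq_zero {G : Matrix ι ι R} (hG : G.IsSymm)
    (h : G *ᵥ (fun _ => 1) = 0) : of (fun _ _ => 1) * G = 0 := by
  rw [← hG.eq, ← transpose_zero, ← mul_of_one_eq_zero h, transpose_mul]
  rfl

end CommSemiring

section CommRing

variable [CommRing R] [DecidableEq ι] {G : Matrix ι ι R} {a b c d : R}

theorem smul_sub_smul_one_add_smul_of_one_mul_self
    (hGG : G * G = c • G) (hGJ : G * of (fun _ _ => 1) = 0)
    (hJG : of (fun _ _ => 1) * G = 0) {p q r : R} (hp : a * c - 2 * b = p)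
    (hq : a * c * b - b ^ 2 = q)
    (hr : d ^ 2 * Fintype.card ι - 2 * b * d - p * d = r) :
    let A := a • G - b • (1 : Matrix ι ι R) + d • of (fun _ _ => 1)
    A * A = p • A + q • 1 + r • of (fun _ _ => 1) := by
  subst hp hq hr
  simp only [Matrix.add_mul, Matrix.sub_mul, Matrix.mul_add, Matrix.mul_sub,
      Matrix.smul_mul, Matrix.mul_smul, Matrix.mul_one, Matrix.one_mul, hGG, hGJ, hJG,
      of_one_mul_of_one_s14, smul_smul, smul_zero, smul_add, smul_sub]
  match_scalars <;> ring

theorem mulVec_smul_sub_smul_one_add_smul_of_one (h : G *ᵥ (fun _ => 1) = 0) :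
    (a • G - b • (1 : Matrix ι ι R) + d • of (fun _ _ => 1)) *ᵥ (fun _ => 1) =
      fun _ => d * Fintype.card ι - b := by
  rw [add_mulVec, sub_mulVec, smul_mulVec, smul_mulVec, smul_mulVec, h, one_mulVec]
  ext i
  simp only [Pi.add_apply, Pi.sub_apply, Pi.smul_apply, Pi.zero_apply, smul_eq_mul, mulVec,
    dotProduct, of_apply, mul_one, Finset.sum_const, Finset.card_univ, nsmul_eq_mul]
  ring

end CommRing

end Matrix

/-- Let `Φ` be the synthesis operator of a centered ETF of `n` vectors for
`ℝ^m` with `m < n`, `α = n/m`, `β = √((n−m)/(m(n−1)))`.  Then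
`A = (1/(2β))ΦᴴΦ − ((β+1)/(2β))I + (1/2)J` is the adjacency matrix of an
`SRG(v,k,λ,μ)` with `v = n`, `k = (n−1)/2 − 1/(2β)`,
`λ = n/4 − 1 + (α−4)/(4β)`, `μ = n/4 − α/(4β)`, and `v = 4k − 2λ − 2μ`. -/
theorem centered_real_etf_gives_srg (m n : ℕ) (hm : 0 < m) (hmn : m < n)
    (Φ : Matrix (Fin m) (Fin n) ℝ) (α β : ℝ)
    (hα : α = (n : ℝ) / m)
    (hβ : β = Real.sqrt (((n : ℝ) - m) / (m * ((n : ℝ) - 1))))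
    (hunit : ∀ j, (Φᴴ * Φ) j j = 1)
    (htight : Φ * Φᴴ = ((n : ℝ) / m) • 1)
    (hequi : ∀ i j, i ≠ j → |(Φᴴ * Φ) i j| = β)
    (hcentered : (Φᴴ * Φ) *ᵥ (fun _ => (1 : ℝ)) = 0) :
    IsSRG ((2 * β)⁻¹ • (Φᴴ * Φ) - ((β + 1) / (2 * β)) • (1 : Matrix (Fin n) (Fin n) ℝ)
        + (2⁻¹ : ℝ) • Matrix.of (fun _ _ => (1 : ℝ)))
      (((n : ℝ) - 1) / 2 - 1 / (2 * β))
      ((n : ℝ) / 4 - 1 + (α - 4) / (4 * β))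
      ((n : ℝ) / 4 - α / (4 * β))
    ∧ (n : ℝ) = 4 * (((n : ℝ) - 1) / 2 - 1 / (2 * β))
        - 2 * ((n : ℝ) / 4 - 1 + (α - 4) / (4 * β))
        - 2 * ((n : ℝ) / 4 - α / (4 * β)) := by
  obtain ⟨hβpos, hβsq⟩ :=
    welch_bound_pos_and_sq (by exact_mod_cast hm) (by exact_mod_cast hmn) hβ
  have hG : (Φᴴ * Φ).IsSymm := isHermitian_iff_isSymm.mp (isHermitian_conjTranspose_mul_self Φ)
  subst hα
  refine ⟨⟨isAdjMatrix_of_equiangular hβpos hG hunit hequi, ?_, ?_⟩, by ring⟩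
  · rw [mulVec_smul_sub_smul_one_add_smul_of_one hcentered, Fintype.card_fin]
    ext
    field_simp
    ring
  · refine smul_sub_smul_one_add_smul_of_one_mul_self
      (mul_mul_self_eq_smul_of_mul_eq_smul_one htight) (mul_of_one_eq_zero hcentered)
      (hG.of_one_mul_eq_zero hcentered) ?_ ?_ ?_
    · field_simp
      ring
    · field_simp
      linear_combination (-4) * hβsq
    · rw [Fintype.card_fin]
      field_simp
      ring
end

section
/- Let φ₁,…,φₙ be an axial ETF for ℝᵐ with m < n, α = n/m, β = √((n−m)/(m(n−1))). Then A = (1/(2β))Φ*Φ − ((β+1)/(2β))I + (1/2)J is the adjacency matrix of an SRG(v,k,λ,μ) with v = n, k = (n−1)/2 + (α−1)/(2β), λ = n/4 − 1 + (3α−4)/(4β), μ = n/4 + α/(4β), and these parameters satisfy v = 4k − 2λ − 2μ. -/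
/-!
Write `G = ΦᵀΦ` and `J` for the all-ones matrix. Tightness gives `G² = αG`, axiality gives
`GJ = JG = αJ`, and `J² = nJ`, so `I`, `G`, `J` span a commutative algebra and the square of
`A = aG − bI + cJ` is again a combination of them; comparing coefficients with the SRG equation
leaves one scalar condition, which is `α = 1 + (n − 1)β²`, read off the diagonal of `G² = αG`.
Since `β ≠ 0` (as `α > 1`), `A = (J − I + (G − I)/β)/2` has zero diagonal and entries `(1 ± 1)/2`
off it.
-/

open Matrix

section RingIdentity

variable {R A : Type*} [CommRing R] [Ring A] [Algebra R A]

theorem smul_sub_add_smul_mul_self {G J : A} {α ν : R} (hGG : G * G = α • G)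
    (hGJ : G * J = α • J) (hJG : J * G = α • J) (hJJ : J * J = ν • J) (a b c : R) :
    (a • G - b • 1 + c • J) * (a • G - b • 1 + c • J)
      = (a * a * α - 2 * a * b) • G + (b * b) • (1 : A)
        + (2 * a * c * α + c * c * ν - 2 * b * c) • J := by
  simp only [sub_mul, mul_sub, add_mul, mul_add, smul_mul_assoc,
    mul_smul_comm, hGG, hGJ, hJG, hJJ, mul_one, one_mul]
  module

end RingIdentity

section AllOnes

variable {ι R : Type*} [Fintype ι] [Semiring R]

theorem mul_ones_of_mulVec_ones {G : Matrix ι ι R} {α : R}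
    (hG : G *ᵥ (fun _ => 1) = α • fun _ => 1) :
    G * of (fun _ _ => (1 : R)) = α • of fun _ _ => 1 := by
  ext i j
  simpa [mul_apply, mulVec, dotProduct] using congrFun hG i

theorem ones_mul_of_mulVec_ones {G : Matrix ι ι R} {α : R} (hsymm : G.IsSymm)
    (hG : G *ᵥ (fun _ => 1) = α • fun _ => 1) :
    of (fun _ _ => (1 : R)) * G = α • of fun _ _ => 1 := by
  ext i j
  simpa [mul_apply, mulVec, dotProduct, ← hsymm.apply j] using congrFun hG j

theorem ones_mul_ones :
    of (fun _ _ => (1 : R)) * of (fun _ _ => (1 : R))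
      = (Fintype.card ι : R) • of fun (_ _ : ι) => (1 : R) := by
  ext i j
  simp [mul_apply]

end AllOnes

theorem conjTranspose_mul_self_mul_self_of_mul_conjTranspose {m n R : Type*} [Fintype m]
    [Fintype n] [DecidableEq m] [CommSemiring R] [StarRing R] {Φ : Matrix m n R} {c : R}
    (hΦ : Φ * Φᴴ = c • 1) : Φᴴ * Φ * (Φᴴ * Φ) = c • (Φᴴ * Φ) := by
  rw [← Matrix.mul_assoc, Matrix.mul_assoc Φᴴ, hΦ, Matrix.mul_smul, Matrix.mul_one, Matrix.smul_mul]

section Equiangular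

variable {ι : Type*} [DecidableEq ι] {G : Matrix ι ι ℝ} {β : ℝ}

theorem eq_one_add_card_sub_one_mul_sq_of_equiangular [Fintype ι] {α : ℝ} (hsymm : G.IsSymm)
    (hGG : G * G = α • G) (hdiag : ∀ i, G i i = 1) (hoff : ∀ i j, i ≠ j → |G i j| = β)
    (i : ι) : α = 1 + (Fintype.card ι - 1 : ℝ) * β ^ 2 := by
  have hcard : ((Finset.univ.erase i).card : ℝ) = Fintype.card ι - 1 := by
    rw [Finset.card_erase_of_mem (Finset.mem_univ i), Finset.card_univ,
      Nat.cast_sub (Fintype.card_pos_iff.mpr ⟨i⟩), Nat.cast_one]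
  calc α = (G * G) i i := by simp [hGG, hdiag]
    _ = ∑ j, G i j ^ 2 := by simp [mul_apply, hsymm.apply i, sq]
    _ = G i i ^ 2 + ∑ j ∈ Finset.univ.erase i, G i j ^ 2 :=
      (Finset.add_sum_erase _ _ (Finset.mem_univ i)).symm
    _ = 1 + ∑ _j ∈ Finset.univ.erase i, β ^ 2 := by
      rw [hdiag, one_pow]
      congr 1
      refine Finset.sum_congr rfl fun j hj => ?_
      rw [← sq_abs, hoff i j (Finset.ne_of_mem_erase hj).symm]
    _ = 1 + (Fintype.card ι - 1 : ℝ) * β ^ 2 := by rw [Finset.sum_const, nsmul_eq_mul, hcard]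

theorem isAdjMatrix_of_equiangular (hsymm : G.IsSymm) (hdiag : ∀ i, G i i = 1)
    (hoff : ∀ i j, i ≠ j → |G i j| = β) (hβ : β ≠ 0) :
    ((2 * β)⁻¹ • G - ((β + 1) / (2 * β)) • (1 : Matrix ι ι ℝ)
      + (2⁻¹ : ℝ) • of fun _ _ => (1 : ℝ)).IsAdjMatrix := by
  set A : Matrix ι ι ℝ := (2 * β)⁻¹ • G - ((β + 1) / (2 * β)) • (1 : Matrix ι ι ℝ)
    + (2⁻¹ : ℝ) • of fun _ _ => (1 : ℝ) with hA
  have hAdiag : ∀ i, A i i = 0 := fun i => by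
    simp only [hA, Matrix.add_apply, Matrix.sub_apply, Matrix.smul_apply, one_apply_eq,
      of_apply, smul_eq_mul, hdiag]
    field_simp
    ring
  refine ⟨fun i j => ?_, ?_, hAdiag⟩
  · rcases eq_or_ne i j with rfl | hij
    · exact Or.inl (hAdiag i)
    rcases eq_or_eq_neg_of_abs_eq (hoff i j hij) with h | h <;>
      simp only [hA, Matrix.add_apply, Matrix.sub_apply, Matrix.smul_apply, one_apply_ne hij,
        of_apply, smul_eq_mul, h]
    · right; field_simp; ring
    · left; field_simp; ring
  · simp only [hA, IsSymm, transpose_add, transpose_sub, transpose_smul, transpose_one, hsymm.eq]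
    rfl

end Equiangular

theorem axial_real_etf_gives_srg_general (m n : ℕ) (hm : 0 < m) (hmn : m < n)
    (Φ : Matrix (Fin m) (Fin n) ℝ) (α β : ℝ)
    (hα : α = (n : ℝ) / m)
    (hunit : ∀ j, (Φᴴ * Φ) j j = 1)
    (htight : Φ * Φᴴ = ((n : ℝ) / m) • 1)
    (hequi : ∀ i j, i ≠ j → |(Φᴴ * Φ) i j| = β)
    (haxial : (Φᴴ * Φ) *ᵥ (fun _ => (1 : ℝ)) = α • (fun _ => (1 : ℝ))) :
    IsSRG ((2 * β)⁻¹ • (Φᴴ * Φ) - ((β + 1) / (2 * β)) • (1 : Matrix (Fin n) (Fin n) ℝ)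
        + (2⁻¹ : ℝ) • Matrix.of (fun _ _ => (1 : ℝ)))
      (((n : ℝ) - 1) / 2 + (α - 1) / (2 * β))
      ((n : ℝ) / 4 - 1 + (3 * α - 4) / (4 * β))
      ((n : ℝ) / 4 + α / (4 * β))
    ∧ (n : ℝ) = 4 * (((n : ℝ) - 1) / 2 + (α - 1) / (2 * β))
        - 2 * ((n : ℝ) / 4 - 1 + (3 * α - 4) / (4 * β))
        - 2 * ((n : ℝ) / 4 + α / (4 * β)) := by
  set G := Φᴴ * Φ
  have hsymm : G.IsSymm := isHermitian_iff_isSymm.mp (isHermitian_conjTranspose_mul_self Φ)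
  have hGG : G * G = α • G := by
    rw [hα]; exact conjTranspose_mul_self_mul_self_of_mul_conjTranspose htight
  have hwelch : α = 1 + ((n : ℝ) - 1) * β ^ 2 := by
    simpa using eq_one_add_card_sub_one_mul_sq_of_equiangular hsymm hGG hunit hequi ⟨m, hmn⟩
  have hβ : β ≠ 0 := by
    have hα1 : 1 < α := hα ▸ (one_lt_div (by exact_mod_cast hm)).mpr (by exact_mod_cast hmn)
    rintro rfl
    simp [hwelch] at hα1
  refine ⟨⟨isAdjMatrix_of_equiangular hsymm hunit hequi hβ, ?_, ?_⟩, by field_simp; ring⟩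
  · have hJ : (of fun (_ _ : Fin n) => (1 : ℝ)) *ᵥ (fun _ => 1) = fun _ => (n : ℝ) := by
      ext; simp [mulVec, dotProduct]
    ext i
    simp only [add_mulVec, sub_mulVec, smul_mulVec, one_mulVec, haxial, hJ, Pi.add_apply,
      Pi.sub_apply, Pi.smul_apply, smul_eq_mul, mul_one]
    field_simp
    ring
  · rw [smul_sub_add_smul_mul_self hGG (mul_ones_of_mulVec_ones haxial)
      (ones_mul_of_mulVec_ones hsymm haxial) ones_mul_ones]
    match_scalars <;> simp only [Fintype.card_fin, hwelch] <;> field_simp <;> ring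

/-- Let `Φ` be the synthesis operator of an axial ETF of `n` vectors for
`ℝ^m` with `m < n`, `α = n/m`, `β = √((n−m)/(m(n−1)))`.  Then
`A = (1/(2β))ΦᴴΦ − ((β+1)/(2β))I + (1/2)J` is the adjacency matrix of an
`SRG(v,k,λ,μ)` with `v = n`, `k = (n−1)/2 + (α−1)/(2β)`,
`λ = n/4 − 1 + (3α−4)/(4β)`, `μ = n/4 + α/(4β)`, and `v = 4k − 2λ − 2μ`. -/
theorem axial_real_etf_gives_srg (m n : ℕ) (hm : 0 < m) (hmn : m < n)
    (Φ : Matrix (Fin m) (Fin n) ℝ) (α β : ℝ)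
    (hα : α = (n : ℝ) / m)
    (hβ : β = Real.sqrt (((n : ℝ) - m) / (m * ((n : ℝ) - 1))))
    (hunit : ∀ j, (Φᴴ * Φ) j j = 1)
    (htight : Φ * Φᴴ = ((n : ℝ) / m) • 1)
    (hequi : ∀ i j, i ≠ j → |(Φᴴ * Φ) i j| = β)
    (haxial : (Φᴴ * Φ) *ᵥ (fun _ => (1 : ℝ)) = α • (fun _ => (1 : ℝ))) :
    IsSRG ((2 * β)⁻¹ • (Φᴴ * Φ) - ((β + 1) / (2 * β)) • (1 : Matrix (Fin n) (Fin n) ℝ)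
        + (2⁻¹ : ℝ) • Matrix.of (fun _ _ => (1 : ℝ)))
      (((n : ℝ) - 1) / 2 + (α - 1) / (2 * β))
      ((n : ℝ) / 4 - 1 + (3 * α - 4) / (4 * β))
      ((n : ℝ) / 4 + α / (4 * β))
    ∧ (n : ℝ) = 4 * (((n : ℝ) - 1) / 2 + (α - 1) / (2 * β))
        - 2 * ((n : ℝ) / 4 - 1 + (3 * α - 4) / (4 * β))
        - 2 * ((n : ℝ) / 4 + α / (4 * β)) :=
  axial_real_etf_gives_srg_general m n hm hmn Φ α β hα hunit htight hequi haxial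
end

section
/- Let A be the adjacency matrix of an SRG(v,k,λ,μ) with 0 < k < v−1. There exist β > 0 and a positive integer m such that G = 2βA + (β+1)I − βJ satisfies G² = αG with α = v/m (making G the Gram matrix of a real ETF) if and only if v = 4k − 2λ − 2μ. -/
/-!
By the SRG relations, `G(β)²` is a linear combination of `A`, `I` and `J`. Comparing the entries
of `G² = αG` at an edge and at a non-edge (both exist since `0 < k < v - 1`) gives
`β²(v - 4k + 2λ + 2μ) = 0`. Conversely, if `v = 4k - 2λ - 2μ`, then `G² = αG` with
`α = 2(λ - μ + 1)β + 2` as soon as `(v - 1)β² = 2(λ - μ + 1)β + 1`, which has a positive root.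
Then `α > 0` and `G / α` is idempotent, so its trace `v / α` is its rank, a natural number `m`.
-/

open Matrix

/-- The matrix `G(β) = 2βA + (β+1)I − βJ`. -/
def gramOf {v : ℕ} (A : Matrix (Fin v) (Fin v) ℝ) (β : ℝ) :
    Matrix (Fin v) (Fin v) ℝ :=
  (2 * β) • A + (β + 1) • (1 : Matrix (Fin v) (Fin v) ℝ)
    - β • Matrix.of (fun _ _ => (1 : ℝ))

section AllOnes

variable {n R : Type*} [Fintype n]

theorem Matrix.allOnes_mul_allOnes [Semiring R] :
    (of fun _ _ => (1 : R) : Matrix n n R) * of (fun _ _ => 1) =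
      (Fintype.card n : R) • of (fun _ _ => 1) := by
  ext i j
  simp [mul_apply]

theorem Matrix.mul_allOnes_of_mulVec_one [CommSemiring R] {A : Matrix n n R} {k : R}
    (hA : A *ᵥ (fun _ => 1) = fun _ => k) :
    A * of (fun _ _ => 1) = k • of (fun _ _ => 1) := by
  ext i j
  simpa [mul_apply, mulVec, dotProduct] using congrFun hA i

theorem Matrix.allOnes_mul_of_mulVec_one [CommSemiring R] {A : Matrix n n R} {k : R}
    (hsymm : A.IsSymm) (hA : A *ᵥ (fun _ => 1) = fun _ => k) :
    of (fun _ _ => 1) * A = k • of (fun _ _ => 1) := by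
  have hJ : (of fun _ _ => (1 : R) : Matrix n n R)ᵀ = of fun _ _ => 1 := rfl
  rw [← transpose_inj, transpose_mul, hsymm.eq, transpose_smul, hJ, mul_allOnes_of_mulVec_one hA]

end AllOnes

theorem Matrix.exists_trace_eq_natCast_of_isIdempotentElem {n K : Type*} [Fintype n]
    [DecidableEq n] [Field K] {P : Matrix n n K} (hP : IsIdempotentElem P) :
    ∃ m : ℕ, P.trace = m := by
  rw [← trace_toLin'_eq]
  exact ⟨_, (LinearMap.IsIdempotentElem.isProj_range _ (hP.map toLinAlgEquiv')).trace⟩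

theorem Matrix.exists_natCast_eq_trace_div_of_mul_self_eq_smul {n K : Type*} [Fintype n]
    [DecidableEq n] [Field K] {G : Matrix n n K} {α : K} (hα : α ≠ 0) (hG : G * G = α • G) :
    ∃ m : ℕ, G.trace / α = m := by
  have hP : IsIdempotentElem (α⁻¹ • G) := by
    rw [IsIdempotentElem, smul_mul_smul, hG, smul_smul, mul_assoc, inv_mul_cancel₀ hα, mul_one]
  simpa [trace_smul, div_eq_inv_mul] using exists_trace_eq_natCast_of_isIdempotentElem hP

namespace Matrix.IsAdjMatrix

variable {V : Type*} [Fintype V] {A : Matrix V V ℝ}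

theorem exists_apply_eq_one (hA : A.IsAdjMatrix) {i : V} (h : 0 < ∑ j, A i j) :
    ∃ j, A i j = 1 := by
  by_contra! hne
  simp [(hA.apply_ne_one_iff i _).1 (hne _)] at h

theorem exists_ne_apply_eq_zero [DecidableEq V] (hA : A.IsAdjMatrix) {i : V}
    (h : ∑ j, A i j < Fintype.card V - 1) : ∃ j ≠ i, A i j = 0 := by
  by_contra! hne
  have hrow : ∀ j, A i j = 1 - (1 : Matrix V V ℝ) i j := by
    intro j
    rcases eq_or_ne j i with rfl | hji
    · simp [hA.apply_diag]
    · simp [one_apply_ne' hji, (hA.apply_ne_zero_iff i j).1 (hne j hji)]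
  simp [hrow, Finset.sum_sub_distrib, one_apply] at h

end Matrix.IsAdjMatrix

theorem exists_pos_mul_sq_eq (s : ℝ) {a : ℝ} (ha : 0 < a) :
    ∃ β : ℝ, 0 < β ∧ a * β ^ 2 = 2 * s * β + 1 := by
  have hd : 0 ≤ s ^ 2 + a := by positivity
  have hsqrt : |s| < √(s ^ 2 + a) := by
    rw [← Real.sqrt_sq_eq_abs]
    exact Real.sqrt_lt_sqrt (sq_nonneg s) (by linarith)
  refine ⟨(s + √(s ^ 2 + a)) / a, div_pos (by linarith [neg_abs_le s]) ha, ?_⟩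
  field_simp
  nlinarith [Real.sq_sqrt hd]

theorem trace_gramOf {v : ℕ} {A : Matrix (Fin v) (Fin v) ℝ} (hA : A.IsAdjMatrix) (β : ℝ) :
    (gramOf A β).trace = v := by
  simp [gramOf, trace, hA.apply_diag]

namespace IsSRG

variable {v : ℕ} {A : Matrix (Fin v) (Fin v) ℝ} {k l mu : ℝ}

theorem sum_row (h : IsSRG A k l mu) (i : Fin v) : ∑ j, A i j = k := by
  simpa [mulVec, dotProduct] using congrFun h.2.1 i

theorem gramOf_mul_self (h : IsSRG A k l mu) (β : ℝ) :
    gramOf A β * gramOf A β =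
      (4 * β ^ 2 * (l - mu) + 4 * β * (β + 1)) • A
      + (4 * β ^ 2 * (k - mu) + (β + 1) ^ 2) • (1 : Matrix (Fin v) (Fin v) ℝ)
      + (4 * β ^ 2 * mu - 4 * β ^ 2 * k - 2 * β * (β + 1) + β ^ 2 * v) •
          of (fun _ _ => (1 : ℝ)) := by
  have hAJ := mul_allOnes_of_mulVec_one h.2.1
  have hJA := allOnes_mul_of_mulVec_one h.1.symm h.2.1
  have hJJ : (of fun _ _ => (1 : ℝ) : Matrix (Fin v) (Fin v) ℝ) * of (fun _ _ => 1) =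
      (v : ℝ) • of (fun _ _ => 1) := by
    simpa using allOnes_mul_allOnes (n := Fin v) (R := ℝ)
  simp only [gramOf, sub_mul, mul_sub, add_mul, mul_add, Matrix.smul_mul, Matrix.mul_smul,
    Matrix.one_mul, Matrix.mul_one, h.2.2, hAJ, hJA, hJJ, smul_smul, smul_add]
  module

theorem eq_of_gramOf_mul_self_eq_smul (h : IsSRG A k l mu) (hk : 0 < k) (hk' : k < (v : ℝ) - 1)
    {β α : ℝ} (hβ : β ≠ 0) (hG : gramOf A β * gramOf A β = α • gramOf A β) :
    (v : ℝ) = 4 * k - 2 * l - 2 * mu := by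
  have hv : 0 < v := by exact_mod_cast (show (0 : ℝ) < v by linarith)
  let i : Fin v := ⟨0, hv⟩
  obtain ⟨j, hj⟩ := h.1.exists_apply_eq_one (i := i) (by rw [h.sum_row]; exact hk)
  have hji : j ≠ i := by rintro rfl; exact h.1.apply_diag_ne i hj
  obtain ⟨j', hj'i, hj'⟩ := h.1.exists_ne_apply_eq_zero (i := i) (by simpa [h.sum_row] using hk')
  rw [h.gramOf_mul_self] at hG
  have hedge := congrFun (congrFun hG i) j
  have hnonedge := congrFun (congrFun hG i) j'
  simp only [smul_of, Matrix.add_apply, Matrix.smul_apply, hj, smul_eq_mul, mul_one,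
    one_apply_ne' hji, mul_zero, add_zero, of_apply, Pi.smul_apply, gramOf, Matrix.sub_apply, hj',
    one_apply_ne' hj'i, zero_add, zero_sub, mul_neg] at hedge hnonedge
  have key : β ^ 2 * ((v : ℝ) - (4 * k - 2 * l - 2 * mu)) = 0 := by
    linear_combination (hedge + hnonedge) / 2
  simpa [hβ, sub_eq_zero] using key

theorem gramOf_mul_self_eq_smul (h : IsSRG A k l mu) (hv : (v : ℝ) = 4 * k - 2 * l - 2 * mu)
    {β : ℝ} (hβ : ((v : ℝ) - 1) * β ^ 2 = 2 * (l - mu + 1) * β + 1) :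
    gramOf A β * gramOf A β = (2 * (l - mu + 1) * β + 2) • gramOf A β := by
  rw [h.gramOf_mul_self, gramOf, smul_sub, smul_add]
  match_scalars
  · ring
  · linear_combination (-β ^ 2) * hv + hβ
  · linear_combination β ^ 2 * hv

end IsSRG

/-- Let `A` be the adjacency matrix of an `SRG(v,k,λ,μ)` with `0 < k < v−1`.
There exist `β > 0` and a positive integer `m` such that
`G = 2βA + (β+1)I − βJ` satisfies `G² = (v/m)G` (making `G` the Gram matrix of
a real ETF for `ℝ^m`) if and only if `v = 4k − 2λ − 2μ`. -/
theorem srg_gram_etf_iff (v : ℕ) (k l mu : ℝ)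
    (A : Matrix (Fin v) (Fin v) ℝ) (h : IsSRG A k l mu)
    (hk : 0 < k) (hk' : k < (v : ℝ) - 1) :
    (∃ β : ℝ, 0 < β ∧ ∃ m : ℕ, 0 < m ∧
        gramOf A β * gramOf A β = ((v : ℝ) / m) • gramOf A β) ↔
      (v : ℝ) = 4 * k - 2 * l - 2 * mu := by
  refine ⟨fun ⟨β, hβ, _, _, hG⟩ => h.eq_of_gramOf_mul_self_eq_smul hk hk' hβ.ne' hG, fun hv => ?_⟩
  obtain ⟨β, hβ, hquad⟩ := exists_pos_mul_sq_eq (l - mu + 1) (a := (v : ℝ) - 1) (by linarith)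
  have hG := h.gramOf_mul_self_eq_smul hv hquad
  -- by `hquad`, this `α` equals `(v - 1)β² + 1`
  have hα : 0 < 2 * (l - mu + 1) * β + 2 := by nlinarith
  obtain ⟨m, hm⟩ := exists_natCast_eq_trace_div_of_mul_self_eq_smul hα.ne' hG
  rw [trace_gramOf h.1] at hm
  have hm0 : (0 : ℝ) < m := hm ▸ div_pos (by linarith) hα
  refine ⟨β, hβ, m, Nat.cast_pos.1 hm0, ?_⟩
  rw [← hm, div_div_cancel₀ (by linarith), hG]
end

section
/- If there exists an SRG(v,k,λ,μ) with v = 4k − 2λ − 2μ and 0 < k < v−1, then there exists an SRG with parameters (v−1, k(v−2k)/(v−2k−1), (3k−v)/2 + 3k/(2(v−2k−1)), (k/2)·(v−2k)/(v−2k−1)); in particular its 'μ' parameter equals half its 'k' parameter. -/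
open Matrix

/-!
The Seidel matrix `S = J - I - 2A` of an `SRG(v,k,λ,μ)` with `v = 4k - 2λ - 2μ` satisfies
`S² = (v-1)I + cS` with `c = 2(μ - λ - 1)`, and this survives switching `S ↦ DSD` by a diagonal
`±1` matrix `D`. Switching so that vertex `0` becomes isolated and then deleting it leaves a Seidel
matrix `T` with row sums `c` and `T² = (v-1)I + cT - J`; the graph with Seidel matrix `T` is then
strongly regular with `μ' = k'/2 = k - μ`. The identity `k(k - λ - 1) = (v - k - 1)μ` puts the
parameters in the stated form.
-/

local notation "𝐉" => Matrix.of (fun _ _ => (1 : ℝ))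

namespace Matrix

variable {ι : Type*}

theorem transpose_of_one : (𝐉 : Matrix ι ι ℝ)ᵀ = 𝐉 := rfl

theorem of_one_mul_of_one_s18 [Fintype ι] :
    (𝐉 : Matrix ι ι ℝ) * 𝐉 = (Fintype.card ι : ℝ) • 𝐉 := by
  ext i j
  simp [mul_apply]

theorem mul_of_one_of_mulVec_one [Fintype ι] {A : Matrix ι ι ℝ} {k : ℝ}
    (hA : A *ᵥ (fun _ => 1) = fun _ => k) : A * 𝐉 = k • 𝐉 := by
  ext i j
  simpa [mul_apply, mulVec, dotProduct] using congrFun hA i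

theorem of_one_mul_of_mulVec_one [Fintype ι] {A : Matrix ι ι ℝ} {k : ℝ} (hs : A.IsSymm)
    (hA : A *ᵥ (fun _ => 1) = fun _ => k) : 𝐉 * A = k • 𝐉 := by
  rw [← hs.eq, ← transpose_of_one, ← transpose_mul, mul_of_one_of_mulVec_one hA,
    transpose_smul, transpose_of_one]

def seidel [DecidableEq ι] (A : Matrix ι ι ℝ) : Matrix ι ι ℝ := 𝐉 - 1 - (2 : ℝ) • A

noncomputable def ofSeidel [DecidableEq ι] (S : Matrix ι ι ℝ) : Matrix ι ι ℝ :=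
  (1 / 2 : ℝ) • (𝐉 - 1 - S)

structure IsSeidel (S : Matrix ι ι ℝ) : Prop where
  symm : S.IsSymm
  apply_diag : ∀ i, S i i = 0
  sq_apply_of_ne : ∀ ⦃i j⦄, i ≠ j → S i j ^ 2 = 1

theorem seidel_apply_of_ne [DecidableEq ι] (A : Matrix ι ι ℝ) {i j : ι} (h : i ≠ j) :
    seidel A i j = 1 - 2 * A i j := by
  simp [seidel, one_apply_ne h]

theorem IsAdjMatrix.sq_one_sub_two_mul {A : Matrix ι ι ℝ} (hA : A.IsAdjMatrix) (i j : ι) :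
    (1 - 2 * A i j) ^ 2 = 1 := by
  rcases hA.zero_or_one i j with h | h <;> norm_num [h]

theorem IsAdjMatrix.isSeidel_seidel [DecidableEq ι] {A : Matrix ι ι ℝ} (hA : A.IsAdjMatrix) :
    IsSeidel (seidel A) where
  symm := by simp [seidel, IsSymm, transpose_sub, transpose_of_one, hA.symm.eq]
  apply_diag i := by simp [seidel, hA.apply_diag i]
  sq_apply_of_ne i j h := by
    rw [seidel_apply_of_ne A h]
    exact hA.sq_one_sub_two_mul i j

theorem IsSeidel.conj_diagonal [Fintype ι] [DecidableEq ι] {S : Matrix ι ι ℝ}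
    (hS : IsSeidel S) {d : ι → ℝ} (hd : ∀ i, d i ^ 2 = 1) : IsSeidel (diagonal d * S * diagonal d) where
  symm := by simp [IsSymm, transpose_mul, hS.symm.eq, Matrix.mul_assoc]
  apply_diag i := by simp [mul_diagonal, diagonal_mul, hS.apply_diag i]
  sq_apply_of_ne i j h := by
    simp only [mul_diagonal, diagonal_mul]
    rw [mul_pow, mul_pow, hd, hd, hS.sq_apply_of_ne h]
    norm_num

theorem IsSeidel.submatrix {κ : Type*} {S : Matrix ι ι ℝ} (hS : IsSeidel S) {f : κ → ι}
    (hf : Function.Injective f) : IsSeidel (S.submatrix f f) where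
  symm := hS.symm.submatrix f
  apply_diag i := hS.apply_diag (f i)
  sq_apply_of_ne _ _ h := hS.sq_apply_of_ne (hf.ne h)

theorem IsSeidel.isAdjMatrix_ofSeidel [DecidableEq ι] {S : Matrix ι ι ℝ} (hS : IsSeidel S) :
    (ofSeidel S).IsAdjMatrix where
  zero_or_one i j := by
    by_cases h : i = j
    · simp [ofSeidel, h, hS.apply_diag]
    · rcases sq_eq_one_iff.mp (hS.sq_apply_of_ne h) with hij | hij <;>
        norm_num [ofSeidel, one_apply_ne h, hij]
  symm := by simp [ofSeidel, IsSymm, transpose_sub, transpose_of_one, hS.symm.eq]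
  apply_diag i := by simp [ofSeidel, hS.apply_diag i]

theorem conj_diagonal_mul_self [Fintype ι] [DecidableEq ι] {R : Type*} [CommRing R]
    {S : Matrix ι ι R} {d : ι → R} {a c : R} (hd : ∀ i, d i ^ 2 = 1)
    (hS : S * S = a • 1 + c • S) :
    diagonal d * S * diagonal d * (diagonal d * S * diagonal d)
      = a • 1 + c • (diagonal d * S * diagonal d) := by
  have hD : diagonal d * diagonal d = 1 := by
    rw [diagonal_mul_diagonal]
    simp only [← sq, hd, diagonal_one]
  calc diagonal d * S * diagonal d * (diagonal d * S * diagonal d)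
      = diagonal d * (S * (diagonal d * diagonal d) * S) * diagonal d := by
        simp only [Matrix.mul_assoc]
    _ = a • 1 + c • (diagonal d * S * diagonal d) := by
        rw [hD, Matrix.mul_one, hS, Matrix.mul_add, Matrix.add_mul]
        simp only [Matrix.mul_smul, Matrix.smul_mul, Matrix.mul_one, hD]

section Switching

variable [Fintype ι] [DecidableEq ι]

/-- The Seidel matrix of `A` switched with respect to the neighbourhood of `x`, which isolates
`x`. -/
def seidelSwitch (A : Matrix ι ι ℝ) (x : ι) : Matrix ι ι ℝ :=
  diagonal (fun i => 1 - 2 * A x i) * seidel A * diagonal (fun i => 1 - 2 * A x i)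

theorem IsAdjMatrix.isSeidel_seidelSwitch {A : Matrix ι ι ℝ} (hA : A.IsAdjMatrix) (x : ι) :
    IsSeidel (seidelSwitch A x) :=
  hA.isSeidel_seidel.conj_diagonal (hA.sq_one_sub_two_mul x)

theorem IsAdjMatrix.seidelSwitch_apply_left {A : Matrix ι ι ℝ} (hA : A.IsAdjMatrix) {x i : ι}
    (h : x ≠ i) : seidelSwitch A x x i = 1 := by
  simp only [seidelSwitch, mul_diagonal, diagonal_mul, seidel_apply_of_ne A h, hA.apply_diag]
  rw [mul_zero, sub_zero, one_mul, ← sq, hA.sq_one_sub_two_mul]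

theorem IsAdjMatrix.seidelSwitch_mul_self {A : Matrix ι ι ℝ} (hA : A.IsAdjMatrix) (x : ι)
    {a c : ℝ} (hS : seidel A * seidel A = a • 1 + c • seidel A) :
    seidelSwitch A x * seidelSwitch A x = a • 1 + c • seidelSwitch A x :=
  conj_diagonal_mul_self (hA.sq_one_sub_two_mul x) hS

end Switching

variable {n : ℕ}

section DeleteZero

variable {S : Matrix (Fin (n + 1)) (Fin (n + 1)) ℝ} {a c : ℝ}

theorem submatrix_succ_mulVec_one (h00 : S 0 0 = 0) (hcol : ∀ i : Fin n, S i.succ 0 = 1)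
    (hS : S * S = a • 1 + c • S) :
    S.submatrix Fin.succ Fin.succ *ᵥ (fun _ => 1) = fun _ => c := by
  funext i
  have h := congrFun (congrFun hS i.succ) 0
  rw [mul_apply, Fin.sum_univ_succ, h00, mul_zero, zero_add] at h
  simpa [mulVec, dotProduct, hcol, one_apply_ne (Fin.succ_ne_zero i)] using h

theorem submatrix_succ_mul_self (hrow : ∀ j : Fin n, S 0 j.succ = 1)
    (hcol : ∀ i : Fin n, S i.succ 0 = 1) (hS : S * S = a • 1 + c • S) :
    S.submatrix Fin.succ Fin.succ * S.submatrix Fin.succ Fin.succ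
      = a • 1 + c • S.submatrix Fin.succ Fin.succ - 𝐉 := by
  ext i j
  have h := congrFun (congrFun hS i.succ) j.succ
  rw [mul_apply, Fin.sum_univ_succ, hcol, hrow, one_mul] at h
  simp only [add_apply, smul_apply, one_apply, Fin.succ_inj, smul_eq_mul] at h
  simp only [mul_apply, sub_apply, add_apply, smul_apply, one_apply, submatrix_apply, of_apply,
    smul_eq_mul]
  linarith

end DeleteZero

theorem IsSeidel.isSRG_ofSeidel {T : Matrix (Fin n) (Fin n) ℝ} {c : ℝ} (hT : IsSeidel T)
    (hrow : T *ᵥ (fun _ => 1) = fun _ => c) (hsq : T * T = (n : ℝ) • 1 + c • T - 𝐉) :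
    IsSRG (ofSeidel T) ((n - 1 - c) / 2) ((n - 1 - c) / 4 - (c + 2) / 2) ((n - 1 - c) / 4) := by
  refine ⟨hT.isAdjMatrix_ofSeidel, ?_, ?_⟩
  · funext i
    simp only [ofSeidel, smul_mulVec, sub_mulVec, one_mulVec, hrow]
    simp only [Pi.smul_apply, Pi.sub_apply, mulVec, dotProduct, of_apply, mul_one,
      Finset.sum_const, Finset.card_univ, Fintype.card_fin, nsmul_eq_mul, smul_eq_mul]
    ring
  · have hTJ := mul_of_one_of_mulVec_one hrow
    have hJT := of_one_mul_of_mulVec_one hT.symm hrow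
    simp only [ofSeidel, Matrix.smul_mul, Matrix.mul_smul, Matrix.sub_mul, Matrix.mul_sub,
      Matrix.one_mul, Matrix.mul_one, of_one_mul_of_one_s18, Fintype.card_fin, hTJ, hJT, hsq, smul_smul]
    ext i j
    simp only [smul_apply, sub_apply, add_apply, one_apply, of_apply, smul_eq_mul]
    split_ifs <;> ring

noncomputable def descendant (A : Matrix (Fin (n + 1)) (Fin (n + 1)) ℝ) :
    Matrix (Fin n) (Fin n) ℝ :=
  ofSeidel ((seidelSwitch A 0).submatrix Fin.succ Fin.succ)

end Matrix

namespace IsSRG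

variable {k l mu : ℝ}

section

variable {v : ℕ} {A : Matrix (Fin v) (Fin v) ℝ}

theorem param_eq [NeZero v] (hA : IsSRG A k l mu) :
    k * (k - l - 1) = ((v : ℝ) - k - 1) * mu := by
  have h := congrArg (· * 𝐉) hA.2.2
  simp only [Matrix.mul_assoc, mul_of_one_of_mulVec_one hA.2.1, Matrix.mul_smul, Matrix.add_mul,
    Matrix.smul_mul, Matrix.one_mul, of_one_mul_of_one_s18, Fintype.card_fin, smul_smul] at h
  have h00 := congrFun (congrFun h 0) 0
  simp only [Matrix.smul_apply, Matrix.add_apply, of_apply, smul_eq_mul, mul_one] at h00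
  linarith

theorem seidel_mul_self (hA : IsSRG A k l mu) (hv : (v : ℝ) = 4 * k - 2 * l - 2 * mu) :
    seidel A * seidel A = ((v : ℝ) - 1) • 1 + (2 * (mu - l - 1)) • seidel A := by
  simp only [seidel, Matrix.sub_mul, Matrix.mul_sub, Matrix.smul_mul, Matrix.mul_smul,
    Matrix.one_mul, Matrix.mul_one, of_one_mul_of_one_s18, Fintype.card_fin,
    mul_of_one_of_mulVec_one hA.2.1, of_one_mul_of_mulVec_one hA.1.symm hA.2.1, hA.2.2, smul_smul]
  ext i j
  simp only [Matrix.smul_apply, Matrix.sub_apply, Matrix.add_apply, one_apply, of_apply,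
    smul_eq_mul]
  rw [hv]
  split_ifs <;> ring

end

theorem isSRG_descendant {n : ℕ} {A : Matrix (Fin (n + 1)) (Fin (n + 1)) ℝ}
    (hA : IsSRG A k l mu) (hv : ((n + 1 : ℕ) : ℝ) = 4 * k - 2 * l - 2 * mu) :
    IsSRG A.descendant (2 * (k - mu)) (3 * (k - mu) - ((n + 1 : ℕ) : ℝ) / 2) (k - mu) := by
  have hS : seidelSwitch A 0 * seidelSwitch A 0
      = (n : ℝ) • 1 + (2 * (mu - l - 1)) • seidelSwitch A 0 := by
    have h := hA.seidel_mul_self hv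
    rw [Nat.cast_succ, add_sub_cancel_right] at h
    exact hA.1.seidelSwitch_mul_self 0 h
  have hseidel := hA.1.isSeidel_seidelSwitch 0
  have hrow (j : Fin n) : seidelSwitch A 0 0 j.succ = 1 :=
    hA.1.seidelSwitch_apply_left (Fin.succ_ne_zero j).symm
  have hcol (i : Fin n) : seidelSwitch A 0 i.succ 0 = 1 :=
    (hseidel.symm.apply 0 i.succ).trans (hrow i)
  have h : IsSRG A.descendant _ _ _ := (hseidel.submatrix (Fin.succ_injective n)).isSRG_ofSeidel
    (submatrix_succ_mulVec_one (hseidel.apply_diag 0) hcol hS)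
    (submatrix_succ_mul_self hrow hcol hS)
  push_cast at hv ⊢
  convert h using 1 <;> linarith

end IsSRG

theorem descendant_params_eq {v k l mu : ℝ} (hk : k ≠ 0)
    (hparam : k * (k - l - 1) = (v - k - 1) * mu) (hv : v = 4 * k - 2 * l - 2 * mu) :
    k * (v - 2 * k) / (v - 2 * k - 1) = 2 * (k - mu) ∧
      (3 * k - v) / 2 + 3 * k / (2 * (v - 2 * k - 1)) = 3 * (k - mu) - v / 2 ∧
      k / 2 * ((v - 2 * k) / (v - 2 * k - 1)) = k - mu := by
  have hmu : mu * (v - 2 * k - 1) = k * (v - 2 * k - 2) / 2 := by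
    linear_combination -hparam - k / 2 * hv
  have hd : v - 2 * k - 1 ≠ 0 := by
    intro h0
    rw [h0, mul_zero, show v - 2 * k - 2 = -1 by linarith] at hmu
    exact hk (by linarith)
  have hK : k * (v - 2 * k) / (v - 2 * k - 1) = 2 * (k - mu) := by
    rw [div_eq_iff hd]
    linear_combination 2 * hmu
  refine ⟨hK, ?_, by linear_combination hK / 2⟩
  have h2d := mul_ne_zero two_ne_zero hd
  rw [div_add_div _ _ two_ne_zero h2d, div_eq_iff (mul_ne_zero two_ne_zero h2d)]
  linear_combination 12 * hmu

theorem srg_on_v_gives_srg_on_v_sub_one_general (v : ℕ) (hv : 1 ≤ v) (k l mu : ℝ)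
    (h : ∃ A : Matrix (Fin v) (Fin v) ℝ, IsSRG A k l mu)
    (hk : 0 < k)
    (hspecial : (v : ℝ) = 4 * k - 2 * l - 2 * mu) :
    (∃ B : Matrix (Fin (v - 1)) (Fin (v - 1)) ℝ,
        IsSRG B (k * ((v : ℝ) - 2 * k) / ((v : ℝ) - 2 * k - 1))
          ((3 * k - (v : ℝ)) / 2 + 3 * k / (2 * ((v : ℝ) - 2 * k - 1)))
          (k / 2 * (((v : ℝ) - 2 * k) / ((v : ℝ) - 2 * k - 1))))
    ∧ k / 2 * (((v : ℝ) - 2 * k) / ((v : ℝ) - 2 * k - 1))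
        = (k * ((v : ℝ) - 2 * k) / ((v : ℝ) - 2 * k - 1)) / 2 := by
  obtain ⟨n, rfl⟩ : ∃ n, v = n + 1 := ⟨v - 1, by omega⟩
  obtain ⟨A, hA⟩ := h
  obtain ⟨hK, hL, hM⟩ := descendant_params_eq hk.ne' hA.param_eq hspecial
  refine ⟨⟨A.descendant, ?_⟩, by ring⟩
  rw [hK, hL, hM]
  exact hA.isSRG_descendant hspecial

/-- If there exists an `SRG(v,k,λ,μ)` with `v = 4k − 2λ − 2μ` and
`0 < k < v−1`, then there exists an SRG with parameters
`(v−1, k(v−2k)/(v−2k−1), (3k−v)/2 + 3k/(2(v−2k−1)), (k/2)·(v−2k)/(v−2k−1))`;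
in particular, its `μ` parameter equals half of its `k` parameter. -/
theorem srg_on_v_gives_srg_on_v_sub_one (v : ℕ) (hv : 1 ≤ v) (k l mu : ℝ)
    (h : ∃ A : Matrix (Fin v) (Fin v) ℝ, IsSRG A k l mu)
    (hk : 0 < k) (hk' : k < (v : ℝ) - 1)
    (hspecial : (v : ℝ) = 4 * k - 2 * l - 2 * mu) :
    (∃ B : Matrix (Fin (v - 1)) (Fin (v - 1)) ℝ,
        IsSRG B (k * ((v : ℝ) - 2 * k) / ((v : ℝ) - 2 * k - 1))
          ((3 * k - (v : ℝ)) / 2 + 3 * k / (2 * ((v : ℝ) - 2 * k - 1)))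
          (k / 2 * (((v : ℝ) - 2 * k) / ((v : ℝ) - 2 * k - 1))))
    ∧ k / 2 * (((v : ℝ) - 2 * k) / ((v : ℝ) - 2 * k - 1))
        = (k * ((v : ℝ) - 2 * k) / ((v : ℝ) - 2 * k - 1)) / 2 :=
  srg_on_v_gives_srg_on_v_sub_one_general v hv k l mu h hk hspecial
end
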